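/- arXiv:1610.08348 — 2 statements merged into one kernel-verified Lean document; each statement's English description precedes it below -/
import Mathlib

section
/- Let θ ∈ (0,1), let s₀, s₁, s₂ be real numbers, and let 1 < p₂ < p₀ < p₁ < ∞, satisfying s₀ = (1−θ)s₁ + θ·s₂ and 1/p₀ = (1−θ)/p₁ + θ/p₂. Let (f_j)_{j∈ℤ} be a family of measurable functions ℝ³ → ℝ such that A := Σ_{j∈ℤ} 2^{p₀s₀j}·‖f_j‖_{L^{p₀}(ℝ³)}^{p₀} is finite, and let ε > 0. Then there exist measurable functions g_j, h_j : ℝ³ → ℝ such that for every j: f_j = g_j + h_j, |g_j| ≤ |f_j| and |h_j| ≤ |f_j| pointwise, and moreover Σ_{j∈ℤ} 2^{p₁s₁j}·‖g_j‖_{L^{p₁}(ℝ³)}^{p₁} ≤ ε^{p₁−p₀}·A and Σ_{j∈ℤ} 2^{p₂s₂j}·‖h_j‖_{L^{p₂}(ℝ³)}^{p₂} ≤ ε^{p₂−p₀}·A. -/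
open MeasureTheory Set

theorem stmt5 (θ s₀ s₁ s₂ p₀ p₁ p₂ : ℝ) (hθ : θ ∈ Ioo (0:ℝ) 1)
    (hp₂ : 1 < p₂) (h₂₀ : p₂ < p₀) (h₀₁ : p₀ < p₁)
    (hs : s₀ = (1 - θ) * s₁ + θ * s₂)
    (hp : 1 / p₀ = (1 - θ) / p₁ + θ / p₂)
    (f : ℤ → (Fin 3 → ℝ) → ℝ) (hf : ∀ j, Measurable (f j))
    (A : ENNReal)
    (hA : A = ∑' j : ℤ, ENNReal.ofReal ((2:ℝ) ^ (p₀ * s₀ * (j : ℝ))) *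
        ∫⁻ x, ENNReal.ofReal (|f j x| ^ p₀))
    (hAfin : A ≠ ⊤) (ε : ℝ) (hε : 0 < ε) :
    ∃ g h : ℤ → (Fin 3 → ℝ) → ℝ,
      (∀ j, Measurable (g j)) ∧ (∀ j, Measurable (h j)) ∧
      (∀ j x, f j x = g j x + h j x) ∧
      (∀ j x, |g j x| ≤ |f j x|) ∧
      (∀ j x, |h j x| ≤ |f j x|) ∧
      (∑' j : ℤ, ENNReal.ofReal ((2:ℝ) ^ (p₁ * s₁ * (j : ℝ))) *
          ∫⁻ x, ENNReal.ofReal (|g j x| ^ p₁) ≤ ENNReal.ofReal (ε ^ (p₁ - p₀)) * A) ∧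
      (∑' j : ℤ, ENNReal.ofReal ((2:ℝ) ^ (p₂ * s₂ * (j : ℝ))) *
          ∫⁻ x, ENNReal.ofReal (|h j x| ^ p₂) ≤ ENNReal.ofReal (ε ^ (p₂ - p₀)) * A) := by
  have hp₀pos : (0:ℝ) < p₀ := lt_trans (lt_trans one_pos hp₂) h₂₀
  have hp₁pos : (0:ℝ) < p₁ := lt_trans hp₀pos h₀₁
  have hp₂pos : (0:ℝ) < p₂ := lt_trans one_pos hp₂
  have h10 : p₁ - p₀ ≠ 0 := sub_ne_zero.2 (ne_of_gt h₀₁)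
  set t : ℝ := (p₀ * s₀ - p₁ * s₁) / (p₁ - p₀) with ht
  set N : ℤ → ℝ := fun j => ε * (2:ℝ) ^ (t * (j : ℝ)) with hNdef
  have hN : ∀ j, 0 < N j := fun j => mul_pos hε (Real.rpow_pos_of_pos two_pos _)
  -- algebraic identities for the exponents
  have ht1 : t * (p₁ - p₀) = p₀ * s₀ - p₁ * s₁ := div_mul_cancel₀ _ h10
  have hp' : p₁ * p₂ = (1 - θ) * p₀ * p₂ + θ * p₀ * p₁ := by
    field_simp at hp
    linarith [hp]
  have ht2 : t * (p₂ - p₀) = p₀ * s₀ - p₂ * s₂ := by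
    have cross : (p₀ * s₀ - p₁ * s₁) * (p₂ - p₀) = (p₀ * s₀ - p₂ * s₂) * (p₁ - p₀) := by
      subst hs
      linear_combination (s₂ - s₁) * hp'
    rw [ht, div_mul_eq_mul_div, cross, mul_div_assoc, div_self h10, mul_one]
  -- weight identity
  have weight : ∀ (b e : ℝ) (j : ℤ), t * e = p₀ * s₀ - b →
      (2:ℝ) ^ (b * (j:ℝ)) * (N j) ^ e = ε ^ e * (2:ℝ) ^ (p₀ * s₀ * (j:ℝ)) := by
    intro b e j he
    have h2 : (0:ℝ) ≤ 2 := by norm_num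
    rw [hNdef]
    have hje : t * (j:ℝ) * e = (p₀ * s₀ - b) * (j:ℝ) := by rw [mul_right_comm, he]
    rw [Real.mul_rpow hε.le (Real.rpow_nonneg h2 _), ← Real.rpow_mul h2, hje,
      mul_left_comm, ← Real.rpow_add two_pos]
    congr 2
    ring
  -- the splitting
  refine ⟨fun j x => if |f j x| ≤ N j then f j x else 0,
    fun j x => if |f j x| ≤ N j then 0 else f j x, ?_, ?_, ?_, ?_, ?_, ?_, ?_⟩
  · intro j
    exact Measurable.ite (measurableSet_le (hf j).abs measurable_const) (hf j) measurable_const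
  · intro j
    exact Measurable.ite (measurableSet_le (hf j).abs measurable_const) measurable_const (hf j)
  · intro j x; by_cases hx : |f j x| ≤ N j <;> simp [hx]
  · intro j x; by_cases hx : |f j x| ≤ N j <;> simp [hx]
  · intro j x; by_cases hx : |f j x| ≤ N j <;> simp [hx]
  -- first sum
  · have ptw : ∀ j x, |if |f j x| ≤ N j then f j x else 0| ^ p₁ ≤
        (N j) ^ (p₁ - p₀) * |f j x| ^ p₀ := by
      intro j x
      by_cases hx : |f j x| ≤ N j
      · simp only [hx, if_true]
        rcases eq_or_lt_of_le (abs_nonneg (f j x)) with h0 | h0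
        · rw [← h0, Real.zero_rpow (ne_of_gt hp₁pos), Real.zero_rpow (ne_of_gt hp₀pos), mul_zero]
        · calc |f j x| ^ p₁ = |f j x| ^ (p₁ - p₀) * |f j x| ^ p₀ := by
                rw [← Real.rpow_add h0]; ring_nf
            _ ≤ (N j) ^ (p₁ - p₀) * |f j x| ^ p₀ :=
                mul_le_mul_of_nonneg_right (Real.rpow_le_rpow h0.le hx (by linarith))
                  (Real.rpow_nonneg (abs_nonneg _) _)
      · simp only [hx, if_false, abs_zero, Real.zero_rpow (ne_of_gt hp₁pos)]
        positivity
    calc ∑' j : ℤ, ENNReal.ofReal ((2:ℝ) ^ (p₁ * s₁ * (j : ℝ))) *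
          ∫⁻ x, ENNReal.ofReal (|if |f j x| ≤ N j then f j x else 0| ^ p₁)
        ≤ ∑' j : ℤ, ENNReal.ofReal (ε ^ (p₁ - p₀)) *
          (ENNReal.ofReal ((2:ℝ) ^ (p₀ * s₀ * (j : ℝ))) *
            ∫⁻ x, ENNReal.ofReal (|f j x| ^ p₀)) := by
          refine ENNReal.tsum_le_tsum fun j => ?_
          have hint : ∫⁻ x, ENNReal.ofReal (|if |f j x| ≤ N j then f j x else 0| ^ p₁) ≤
              ENNReal.ofReal ((N j) ^ (p₁ - p₀)) * ∫⁻ x, ENNReal.ofReal (|f j x| ^ p₀) := by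
            rw [← lintegral_const_mul' _ _ ENNReal.ofReal_ne_top]
            refine lintegral_mono fun x => ?_
            rw [← ENNReal.ofReal_mul (Real.rpow_nonneg (hN j).le _)]
            exact ENNReal.ofReal_le_ofReal (ptw j x)
          calc ENNReal.ofReal ((2:ℝ) ^ (p₁ * s₁ * (j : ℝ))) *
              ∫⁻ x, ENNReal.ofReal (|if |f j x| ≤ N j then f j x else 0| ^ p₁)
              ≤ ENNReal.ofReal ((2:ℝ) ^ (p₁ * s₁ * (j : ℝ))) *
                (ENNReal.ofReal ((N j) ^ (p₁ - p₀)) * ∫⁻ x, ENNReal.ofReal (|f j x| ^ p₀)) := by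
                gcongr
            _ = ENNReal.ofReal ((2:ℝ) ^ (p₁ * s₁ * (j : ℝ)) * (N j) ^ (p₁ - p₀)) *
                ∫⁻ x, ENNReal.ofReal (|f j x| ^ p₀) := by
                rw [ENNReal.ofReal_mul (Real.rpow_nonneg (by norm_num) _)]; ring
            _ = ENNReal.ofReal (ε ^ (p₁ - p₀)) *
                (ENNReal.ofReal ((2:ℝ) ^ (p₀ * s₀ * (j : ℝ))) *
                  ∫⁻ x, ENNReal.ofReal (|f j x| ^ p₀)) := by
                rw [weight (p₁ * s₁) (p₁ - p₀) j ht1,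
                  ENNReal.ofReal_mul (Real.rpow_nonneg hε.le _), mul_assoc]
      _ = ENNReal.ofReal (ε ^ (p₁ - p₀)) * A := by rw [ENNReal.tsum_mul_left, hA]
  -- second sum
  · have ptw : ∀ j x, |if |f j x| ≤ N j then 0 else f j x| ^ p₂ ≤
        (N j) ^ (p₂ - p₀) * |f j x| ^ p₀ := by
      intro j x
      by_cases hx : |f j x| ≤ N j
      · simp only [hx, if_true, abs_zero, Real.zero_rpow (ne_of_gt hp₂pos)]
        positivity
      · push_neg at hx
        simp only [if_neg (not_le.2 hx)]
        have h0 : (0:ℝ) < |f j x| := lt_trans (hN j) hx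
        calc |f j x| ^ p₂ = |f j x| ^ (p₂ - p₀) * |f j x| ^ p₀ := by
              rw [← Real.rpow_add h0]; ring_nf
          _ ≤ (N j) ^ (p₂ - p₀) * |f j x| ^ p₀ :=
              mul_le_mul_of_nonneg_right (Real.rpow_le_rpow_of_nonpos (hN j) hx.le (by linarith))
                (Real.rpow_nonneg (abs_nonneg _) _)
    calc ∑' j : ℤ, ENNReal.ofReal ((2:ℝ) ^ (p₂ * s₂ * (j : ℝ))) *
          ∫⁻ x, ENNReal.ofReal (|if |f j x| ≤ N j then 0 else f j x| ^ p₂)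
        ≤ ∑' j : ℤ, ENNReal.ofReal (ε ^ (p₂ - p₀)) *
          (ENNReal.ofReal ((2:ℝ) ^ (p₀ * s₀ * (j : ℝ))) *
            ∫⁻ x, ENNReal.ofReal (|f j x| ^ p₀)) := by
          refine ENNReal.tsum_le_tsum fun j => ?_
          have hint : ∫⁻ x, ENNReal.ofReal (|if |f j x| ≤ N j then 0 else f j x| ^ p₂) ≤
              ENNReal.ofReal ((N j) ^ (p₂ - p₀)) * ∫⁻ x, ENNReal.ofReal (|f j x| ^ p₀) := by
            rw [← lintegral_const_mul' _ _ ENNReal.ofReal_ne_top]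
            refine lintegral_mono fun x => ?_
            rw [← ENNReal.ofReal_mul (Real.rpow_nonneg (hN j).le _)]
            exact ENNReal.ofReal_le_ofReal (ptw j x)
          calc ENNReal.ofReal ((2:ℝ) ^ (p₂ * s₂ * (j : ℝ))) *
              ∫⁻ x, ENNReal.ofReal (|if |f j x| ≤ N j then 0 else f j x| ^ p₂)
              ≤ ENNReal.ofReal ((2:ℝ) ^ (p₂ * s₂ * (j : ℝ))) *
                (ENNReal.ofReal ((N j) ^ (p₂ - p₀)) * ∫⁻ x, ENNReal.ofReal (|f j x| ^ p₀)) := by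
                gcongr
            _ = ENNReal.ofReal ((2:ℝ) ^ (p₂ * s₂ * (j : ℝ)) * (N j) ^ (p₂ - p₀)) *
                ∫⁻ x, ENNReal.ofReal (|f j x| ^ p₀) := by
                rw [ENNReal.ofReal_mul (Real.rpow_nonneg (by norm_num) _)]; ring
            _ = ENNReal.ofReal (ε ^ (p₂ - p₀)) *
                (ENNReal.ofReal ((2:ℝ) ^ (p₀ * s₀ * (j : ℝ))) *
                  ∫⁻ x, ENNReal.ofReal (|f j x| ^ p₀)) := by
                rw [weight (p₂ * s₂) (p₂ - p₀) j ht2,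
                  ENNReal.ofReal_mul (Real.rpow_nonneg hε.le _), mul_assoc]
      _ = ENNReal.ofReal (ε ^ (p₂ - p₀)) * A := by rw [ENNReal.tsum_mul_left, hA]
end

section
/- Let 3 < p < ∞ and set r = 2p/(p−3), so that 3/p + 2/r = 1. Then there exists a constant C = C(p) such that for every continuously differentiable, compactly supported vector field v : ℝ³ → ℝ³ and every w ∈ L^p(ℝ³; ℝ³), one has ∫_{ℝ³} |∇v(x)|·|v(x)|·|w(x)| dx ≤ C·‖w‖_{L^p(ℝ³)}^r·‖v‖_{L²(ℝ³)}² + (1/2)·∫_{ℝ³} |∇v(x)|² dx. -/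
/-! Cauchy–Schwarz and Hölder bound the integral by `‖∇v‖₂ ‖v‖_s ‖w‖_p` with `1/s = 1/2 - 1/p`.
Interpolating `L^s` between `L²` and `L^{2n/(n-2)}` with weight `θ = n/p`, and then applying the
Gagliardo–Nirenberg–Sobolev inequality `‖v‖_{2n/(n-2)} ≤ c ‖∇v‖₂`, gives the bound
`c^θ ‖w‖_p ‖v‖₂^{1-θ} ‖∇v‖₂^{1+θ}`. Young's inequality with the exponents `2/(1-θ) = r` and
`2/(1+θ)` turns this into `C ‖w‖_p^r ‖v‖₂² + ‖∇v‖₂²/2`. -/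

open MeasureTheory ENNReal Module

theorem Real.mul_rpow_mul_rpow_le {θ a x y : ℝ} (hθ₀ : -1 < θ) (hθ₁ : θ < 1)
    (ha : 0 ≤ a) (hx : 0 ≤ x) (hy : 0 ≤ y) :
    a * x ^ (1 - θ) * y ^ (1 + θ) ≤
      (1 - θ) / 2 * (1 + θ) ^ ((1 + θ) / (1 - θ)) * a ^ (2 / (1 - θ)) * x ^ 2 + y ^ 2 / 2 := by
  have hsub : 0 < 1 - θ := by linarith
  have hadd : 0 < 1 + θ := by linarith
  -- the weight `l` makes the `y`-term of Young's inequality come out as exactly `y ^ 2 / 2`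
  set l := (1 + θ) ^ ((1 + θ) / 2)
  have hl : 0 < l := by positivity
  have hconj : (2 / (1 - θ)).HolderConjugate (2 / (1 + θ)) :=
    Real.holderConjugate_iff.mpr ⟨by rw [lt_div_iff₀ hsub]; linarith, by field_simp; ring⟩
  have hA : (a * x ^ (1 - θ) * l) ^ (2 / (1 - θ)) =
      (1 + θ) ^ ((1 + θ) / (1 - θ)) * a ^ (2 / (1 - θ)) * x ^ 2 := by
    rw [Real.mul_rpow (by positivity) hl.le, Real.mul_rpow ha (by positivity),
      ← Real.rpow_mul hx, ← Real.rpow_mul hadd.le,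
      show (1 - θ) * (2 / (1 - θ)) = (2 : ℕ) by field_simp; norm_num, Real.rpow_natCast,
      show (1 + θ) / 2 * (2 / (1 - θ)) = (1 + θ) / (1 - θ) by field_simp]
    ring
  have hB : (y ^ (1 + θ) / l) ^ (2 / (1 + θ)) = y ^ 2 / (1 + θ) := by
    rw [Real.div_rpow (by positivity) hl.le, ← Real.rpow_mul hy, ← Real.rpow_mul hadd.le,
      show (1 + θ) * (2 / (1 + θ)) = (2 : ℕ) by field_simp; norm_num, Real.rpow_natCast,
      show (1 + θ) / 2 * (2 / (1 + θ)) = 1 by field_simp, Real.rpow_one]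
  calc a * x ^ (1 - θ) * y ^ (1 + θ) = (a * x ^ (1 - θ) * l) * (y ^ (1 + θ) / l) := by
        field_simp
    _ ≤ (a * x ^ (1 - θ) * l) ^ (2 / (1 - θ)) / (2 / (1 - θ)) +
          (y ^ (1 + θ) / l) ^ (2 / (1 + θ)) / (2 / (1 + θ)) :=
        Real.young_inequality_of_nonneg (by positivity) (by positivity) hconj
    _ = _ := by rw [hA, hB]; field_simp

theorem ENNReal.holderTriple_ofReal {p q r : ℝ} (hp : 0 < p) (hq : 0 < q) (hr : 0 < r)
    (hpqr : 1 / p + 1 / q = 1 / r) :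
    HolderTriple (ENNReal.ofReal p) (ENNReal.ofReal q) (ENNReal.ofReal r) where
  inv_add_inv_eq_inv := by
    rw [← ofReal_inv_of_pos hp, ← ofReal_inv_of_pos hq, ← ofReal_inv_of_pos hr,
      ← ofReal_add (by positivity) (by positivity)]
    simpa only [one_div] using congrArg ENNReal.ofReal hpqr

namespace MeasureTheory

section

variable {α E F G : Type*} [MeasurableSpace α] {μ : Measure α}
  [NormedAddCommGroup E] [NormedAddCommGroup F] [NormedAddCommGroup G]

theorem integral_le_toReal_eLpNorm_one (f : α → ℝ) :
    ∫ x, f x ∂μ ≤ (eLpNorm f 1 μ).toReal := by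
  rw [eLpNorm_one_eq_lintegral_enorm]
  simpa only [ofReal_norm] using (le_abs_self _).trans (norm_integral_le_lintegral_norm f)

theorem integral_norm_sq_eq_lpNorm_sq {f : α → E} (hf : AEStronglyMeasurable f μ) :
    ∫ x, ‖f x‖ ^ 2 ∂μ = lpNorm f 2 μ ^ 2 := by
  rw [lpNorm_eq_integral_norm_rpow_toReal two_ne_zero ofNat_ne_top hf, toReal_ofNat,
    ← Real.rpow_natCast, ← Real.rpow_mul (integral_nonneg fun _ ↦ by positivity)]
  norm_num

theorem eLpNorm_le_eLpNorm_rpow_mul_eLpNorm_rpow {f : α → E} (hf : AEStronglyMeasurable f μ)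
    {p q s θ : ℝ} (hp : 0 < p) (hq : 0 < q) (hθ₀ : 0 < θ) (hθ₁ : θ < 1)
    (hs : 1 / s = (1 - θ) / p + θ / q) :
    eLpNorm f (.ofReal s) μ ≤
      eLpNorm f (.ofReal p) μ ^ (1 - θ) * eLpNorm f (.ofReal q) μ ^ θ := by
  have hθ : 0 < 1 - θ := by linarith
  have hs₀ : 0 < s := one_div_pos.mp (hs ▸ by positivity)
  have : HolderTriple (.ofReal (p / (1 - θ))) (.ofReal (q / θ)) (.ofReal s) :=
    holderTriple_ofReal (by positivity) (by positivity) hs₀ (by rw [hs]; field_simp)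
  have hsplit : (fun x ↦ ‖f x‖) = fun x ↦ ‖f x‖ ^ (1 - θ) * ‖f x‖ ^ θ := by
    ext x
    rw [← Real.rpow_add' (norm_nonneg _) (by norm_num), sub_add_cancel, Real.rpow_one]
  calc eLpNorm f (.ofReal s) μ
      = eLpNorm (fun x ↦ ‖f x‖ ^ (1 - θ) * ‖f x‖ ^ θ) (.ofReal s) μ := by
        rw [← hsplit, eLpNorm_norm]
    _ ≤ 1 * eLpNorm (fun x ↦ ‖f x‖ ^ (1 - θ)) (.ofReal (p / (1 - θ))) μ *
          eLpNorm (fun x ↦ ‖f x‖ ^ θ) (.ofReal (q / θ)) μ :=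
        eLpNorm_le_eLpNorm_mul_eLpNorm_of_nnnorm (by fun_prop (disch := linarith))
          (by fun_prop (disch := linarith)) (· * ·) 1 (.of_forall fun x ↦ by simp [nnnorm_mul])
    _ = eLpNorm f (.ofReal p) μ ^ (1 - θ) * eLpNorm f (.ofReal q) μ ^ θ := by
        rw [one_mul, eLpNorm_norm_rpow _ hθ, eLpNorm_norm_rpow _ hθ₀,
          ← ofReal_mul (by positivity), ← ofReal_mul (by positivity),
          div_mul_cancel₀ _ hθ.ne', div_mul_cancel₀ _ hθ₀.ne']

theorem eLpNorm_norm_mul_norm_mul_norm_le {f : α → E} {g : α → F} {h : α → G}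
    (hf : AEStronglyMeasurable f μ) (hg : AEStronglyMeasurable g μ)
    (hh : AEStronglyMeasurable h μ) {p q : ℝ≥0∞} [HolderTriple p q 2] :
    eLpNorm (fun x ↦ ‖f x‖ * ‖g x‖ * ‖h x‖) 1 μ ≤
      eLpNorm f 2 μ * eLpNorm g p μ * eLpNorm h q μ := by
  simp only [mul_assoc]
  calc eLpNorm (fun x ↦ ‖f x‖ * (‖g x‖ * ‖h x‖)) 1 μ
      ≤ 1 * eLpNorm f 2 μ * eLpNorm (fun x ↦ ‖g x‖ * ‖h x‖) 2 μ :=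
        eLpNorm_le_eLpNorm_mul_eLpNorm_of_nnnorm hf (hg.norm.mul hh.norm) (‖·‖ * ·) 1
          (.of_forall fun x ↦ by simp [nnnorm_mul])
    _ ≤ eLpNorm f 2 μ * (1 * eLpNorm g p μ * eLpNorm h q μ) := by
        rw [one_mul]
        gcongr
        exact eLpNorm_le_eLpNorm_mul_eLpNorm_of_nnnorm hg hh (‖·‖ * ‖·‖) 1
          (.of_forall fun x ↦ by simp [nnnorm_mul])
    _ = eLpNorm f 2 μ * (eLpNorm g p μ * eLpNorm h q μ) := by rw [one_mul]

end

section

variable {E F G : Type*} [NormedAddCommGroup E] [NormedSpace ℝ E] [MeasurableSpace E]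
  [BorelSpace E] [FiniteDimensional ℝ E] (μ : Measure E) [μ.IsAddHaarMeasure]
  [NormedAddCommGroup F] [InnerProductSpace ℝ F] [NormedAddCommGroup G]

theorem eLpNorm_le_eLpNorm_fderiv_two {u : E → F} (hu : ContDiff ℝ 1 u)
    (h2u : HasCompactSupport u) (hn : 2 < finrank ℝ E) :
    eLpNorm u (.ofReal (2 * finrank ℝ E / (finrank ℝ E - 2))) μ ≤
      eLpNormLESNormFDerivOfEqInnerConst μ 2 * eLpNorm (fderiv ℝ u) 2 μ := by
  have hn' : (2 : ℝ) < finrank ℝ E := by exact_mod_cast hn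
  have hsub : (0 : ℝ) < finrank ℝ E - 2 := by linarith
  exact eLpNorm_le_eLpNorm_fderiv_of_eq_inner μ hu h2u (p := 2)
    (p' := (2 * finrank ℝ E / (finrank ℝ E - 2) : ℝ).toNNReal) (by norm_num) (by omega)
    (by rw [Real.coe_toNNReal _ (by positivity)]; push_cast; field_simp)

theorem integral_norm_fderiv_mul_norm_mul_norm_le {v : E → F} {w : E → G}
    (hv : ContDiff ℝ 1 v) (h2v : HasCompactSupport v) {p : ℝ} (hw : MemLp w (.ofReal p) μ)
    (hn : 2 < finrank ℝ E) (hp : finrank ℝ E < p) :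
    ∫ x, ‖fderiv ℝ v x‖ * ‖v x‖ * ‖w x‖ ∂μ ≤
      (eLpNormLESNormFDerivOfEqInnerConst μ 2 : ℝ) ^ (finrank ℝ E / p) *
        lpNorm w (.ofReal p) μ * lpNorm v 2 μ ^ (1 - finrank ℝ E / p) *
          lpNorm (fderiv ℝ v) 2 μ ^ (1 + finrank ℝ E / p) := by
  have hn' : (2 : ℝ) < finrank ℝ E := by exact_mod_cast hn
  set n : ℝ := (finrank ℝ E : ℝ)
  set c := eLpNormLESNormFDerivOfEqInnerConst μ 2
  have hp₂ : 0 < p - 2 := by linarith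
  have hp₀ : 0 < p := by linarith
  have hθ₀ : 0 < n / p := by positivity
  have hθ₁ : n / p < 1 := (div_lt_one hp₀).mpr hp
  have hDv : MemLp (fderiv ℝ v) 2 μ :=
    (hv.continuous_fderiv one_ne_zero).memLp_of_hasCompactSupport (h2v.fderiv (𝕜 := ℝ))
  have hVv : MemLp v 2 μ := hv.continuous.memLp_of_hasCompactSupport h2v
  have : HolderTriple (.ofReal (2 * p / (p - 2))) (.ofReal p) 2 := by
    simpa using holderTriple_ofReal (r := 2) (by positivity) hp₀ two_pos (by field_simp; ring)
  have hInterp : eLpNorm v (.ofReal (2 * p / (p - 2))) μ ≤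
      eLpNorm v 2 μ ^ (1 - n / p) * eLpNorm v (.ofReal (2 * n / (n - 2))) μ ^ (n / p) := by
    simpa using eLpNorm_le_eLpNorm_rpow_mul_eLpNorm_rpow hVv.1 two_pos (by bound) hθ₀ hθ₁
      (by field_simp; ring)
  have key : eLpNorm (fun x ↦ ‖fderiv ℝ v x‖ * ‖v x‖ * ‖w x‖) 1 μ ≤
      eLpNorm (fderiv ℝ v) 2 μ * (eLpNorm v 2 μ ^ (1 - n / p) *
        (c * eLpNorm (fderiv ℝ v) 2 μ) ^ (n / p)) * eLpNorm w (.ofReal p) μ := by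
    refine (eLpNorm_norm_mul_norm_mul_norm_le hDv.1 hVv.1 hw.1
      (p := .ofReal (2 * p / (p - 2))) (q := .ofReal p)).trans ?_
    gcongr
    exact hInterp.trans (by gcongr; exact eLpNorm_le_eLpNorm_fderiv_two μ hv h2v hn)
  calc ∫ x, ‖fderiv ℝ v x‖ * ‖v x‖ * ‖w x‖ ∂μ
      ≤ (eLpNorm (fun x ↦ ‖fderiv ℝ v x‖ * ‖v x‖ * ‖w x‖) 1 μ).toReal :=
        integral_le_toReal_eLpNorm_one _
    _ ≤ (eLpNorm (fderiv ℝ v) 2 μ * (eLpNorm v 2 μ ^ (1 - n / p) *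
        (c * eLpNorm (fderiv ℝ v) 2 μ) ^ (n / p)) * eLpNorm w (.ofReal p) μ).toReal :=
        toReal_mono (by finiteness [hDv.2, hVv.2, hw.2]) key
    _ = _ := by
        simp only [toReal_mul, ← toReal_rpow, coe_toReal, toReal_eLpNorm hDv.1,
          toReal_eLpNorm hVv.1, toReal_eLpNorm hw.1]
        rw [Real.mul_rpow c.coe_nonneg lpNorm_nonneg,
          Real.rpow_one_add' lpNorm_nonneg (by positivity)]
        ring

theorem exists_integral_norm_fderiv_mul_norm_mul_norm_le {p : ℝ} (hn : 2 < finrank ℝ E)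
    (hp : finrank ℝ E < p) :
    ∃ C : ℝ, 0 < C ∧ ∀ (v : E → F) (w : E → G), ContDiff ℝ 1 v → HasCompactSupport v →
      MemLp w (.ofReal p) μ →
      ∫ x, ‖fderiv ℝ v x‖ * ‖v x‖ * ‖w x‖ ∂μ ≤
        C * lpNorm w (.ofReal p) μ ^ (2 * p / (p - finrank ℝ E)) * ∫ x, ‖v x‖ ^ 2 ∂μ +
          1 / 2 * ∫ x, ‖fderiv ℝ v x‖ ^ 2 ∂μ := by
  set c : ℝ := (eLpNormLESNormFDerivOfEqInnerConst μ 2 : ℝ)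
  have hc : 0 ≤ c := NNReal.coe_nonneg _
  set θ : ℝ := finrank ℝ E / p
  set r : ℝ := 2 * p / (p - finrank ℝ E)
  have hp₀ : 0 < p := by linarith [show (0 : ℝ) ≤ finrank ℝ E from Nat.cast_nonneg _]
  have hθ₁ : θ < 1 := (div_lt_one hp₀).mpr hp
  have hr : r = 2 / (1 - θ) := by
    have : p - finrank ℝ E ≠ 0 := by linarith
    simp only [r, θ]; field_simp
  set K := (1 - θ) / 2 * (1 + θ) ^ ((1 + θ) / (1 - θ)) * (c ^ θ) ^ r
  refine ⟨max K 1, lt_max_of_lt_right one_pos, fun v w hv h2v hw ↦ ?_⟩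
  rw [integral_norm_sq_eq_lpNorm_sq hv.continuous.aestronglyMeasurable,
    integral_norm_sq_eq_lpNorm_sq (hv.continuous_fderiv one_ne_zero).aestronglyMeasurable]
  calc _ ≤ c ^ θ * lpNorm w (.ofReal p) μ * lpNorm v 2 μ ^ (1 - θ) *
        lpNorm (fderiv ℝ v) 2 μ ^ (1 + θ) :=
        integral_norm_fderiv_mul_norm_mul_norm_le μ hv h2v hw hn hp
    _ ≤ (1 - θ) / 2 * (1 + θ) ^ ((1 + θ) / (1 - θ)) *
          (c ^ θ * lpNorm w (.ofReal p) μ) ^ (2 / (1 - θ)) * lpNorm v 2 μ ^ 2 +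
          lpNorm (fderiv ℝ v) 2 μ ^ 2 / 2 :=
        Real.mul_rpow_mul_rpow_le (by linarith [show 0 ≤ θ by positivity]) hθ₁
          (mul_nonneg (Real.rpow_nonneg hc _) lpNorm_nonneg) lpNorm_nonneg
          lpNorm_nonneg
    _ = K * (lpNorm w (.ofReal p) μ ^ r * lpNorm v 2 μ ^ 2) +
          1 / 2 * lpNorm (fderiv ℝ v) 2 μ ^ 2 := by
        rw [← hr, Real.mul_rpow (Real.rpow_nonneg hc _) lpNorm_nonneg]
        ring
    _ ≤ max K 1 * lpNorm w (.ofReal p) μ ^ r * lpNorm v 2 μ ^ 2 +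
          1 / 2 * lpNorm (fderiv ℝ v) 2 μ ^ 2 := by
        rw [mul_assoc (max K 1)]
        gcongr
        · exact mul_nonneg (Real.rpow_nonneg lpNorm_nonneg _) (sq_nonneg _)
        · exact le_max_left K 1

end

end MeasureTheory

theorem stmt11 (p r : ℝ) (hp : 3 < p) (hr : r = 2 * p / (p - 3)) :
    ∃ C : ℝ, 0 < C ∧
      ∀ v w : EuclideanSpace ℝ (Fin 3) → EuclideanSpace ℝ (Fin 3),
        ContDiff ℝ 1 v → HasCompactSupport v →
        MemLp w (ENNReal.ofReal p) →
        (∫ x, ‖fderiv ℝ v x‖ * ‖v x‖ * ‖w x‖) ≤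
          C * (eLpNorm w (ENNReal.ofReal p) volume).toReal ^ r *
              (∫ x, ‖v x‖ ^ 2) +
            (1 / 2) * ∫ x, ‖fderiv ℝ v x‖ ^ 2 := by
  obtain ⟨C, hC, hest⟩ := exists_integral_norm_fderiv_mul_norm_mul_norm_le
    (volume : Measure (EuclideanSpace ℝ (Fin 3))) (F := EuclideanSpace ℝ (Fin 3))
    (G := EuclideanSpace ℝ (Fin 3)) (p := p) (by simp) (by simpa using hp)
  refine ⟨C, hC, fun v w hv h2v hw ↦ ?_⟩
  simpa [hr, toReal_eLpNorm hw.1] using hest v w hv h2v hw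
end
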